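/- arXiv:2411.03570 — 2 statements merged into one kernel-verified Lean document; each statement's English description precedes it below -/
import Mathlib

section
/- Let S and R be finite multisets of points in {-1,1}^d, let p: {-1,1}^d → ℝ satisfy 0 ≤ p(x) ≤ B for all x, and let N, Δ, ε > 0. Suppose that for all τ ∈ [0, B], (|S|/N)·P_{x∼S}[p(x) > τ] < 2·P_{x∼R}[p(x) > τ] + Δ, and that (1/N)·Σ_{x∈R} p(x) ≤ ε/4, with |R| = N and Δ·B ≤ ε/2. Then (1/N)·Σ_{x∈S} p(x) ≤ ε. -/
open Classical in
private lemma fmb_card_filter_antitone {α : Type*} (s : Multiset α) (p : α → ℝ) :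
    Antitone (fun τ => ((s.filter fun x => τ < p x).card : ℝ)) := by
  intro a b hab
  have : s.filter (fun x => b < p x) ≤ s.filter (fun x => a < p x) :=
    Multiset.monotone_filter_right s (fun x hx => lt_of_le_of_lt hab hx)
  simp only []
  exact_mod_cast Multiset.card_le_card this

open Classical in
private lemma fmb_intervalIntegrable {α : Type*} (s : Multiset α) (p : α → ℝ) (B : ℝ) :
    IntervalIntegrable (fun τ => ((s.filter fun x => τ < p x).card : ℝ)) MeasureTheory.volume 0 B :=
  ((fmb_card_filter_antitone s p).antitoneOn _).intervalIntegrable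

private lemma fmb_ind_int (c B : ℝ) (hc0 : 0 ≤ c) (hcB : c ≤ B) :
    ∫ τ in (0:ℝ)..B, (if τ < c then (1:ℝ) else 0) = c := by
  have hB : (0:ℝ) ≤ B := hc0.trans hcB
  rw [intervalIntegral.integral_of_le hB]
  have heq : (fun τ => if τ < c then (1:ℝ) else 0) =
      Set.indicator (Set.Iio c) (fun _ => (1:ℝ)) := by
    ext τ; simp [Set.indicator_apply]
  rw [heq, MeasureTheory.integral_indicator measurableSet_Iio,
    MeasureTheory.setIntegral_const, MeasureTheory.measureReal_def, MeasureTheory.Measure.restrict_apply measurableSet_Iio]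
  have hset : Set.Iio c ∩ Set.Ioc 0 B = Set.Ioo 0 c := by
    ext x
    simp only [Set.mem_inter_iff, Set.mem_Iio, Set.mem_Ioc, Set.mem_Ioo]
    constructor
    · rintro ⟨h1, h2, _⟩; exact ⟨h2, h1⟩
    · rintro ⟨h1, h2⟩; exact ⟨h2, h1, (le_of_lt h2).trans hcB⟩
  rw [hset, Real.volume_Ioo, smul_eq_mul, mul_one, sub_zero, ENNReal.toReal_ofReal hc0]

private lemma fmb_ind_integrable (c B : ℝ) :
    IntervalIntegrable (fun τ => if τ < c then (1:ℝ) else 0) MeasureTheory.volume 0 B := by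
  have h : Antitone (fun τ => if τ < c then (1:ℝ) else 0) := by
    intro a b hab
    by_cases hb : b < c
    · simp [hb, lt_of_le_of_lt hab hb]
    · by_cases ha : a < c <;> simp [ha, hb]
  exact (h.antitoneOn _).intervalIntegrable

open Classical in
private lemma fmb_layer_cake {α : Type*} (s : Multiset α) (p : α → ℝ) (B : ℝ)
    (hp : ∀ x, 0 ≤ p x ∧ p x ≤ B) :
    ∫ τ in (0:ℝ)..B, ((s.filter fun x => τ < p x).card : ℝ) = (s.map p).sum := by
  induction s using Multiset.induction_on with
  | empty => simp
  | cons a s ih =>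
    have h1 : ∀ τ : ℝ, ((Multiset.filter (fun x => τ < p x) (a ::ₘ s)).card : ℝ) =
        (if τ < p a then (1:ℝ) else 0) + ((s.filter fun x => τ < p x).card : ℝ) := by
      intro τ
      rw [Multiset.filter_cons]
      split_ifs <;> simp [add_comm]
    calc ∫ τ in (0:ℝ)..B, ((Multiset.filter (fun x => τ < p x) (a ::ₘ s)).card : ℝ)
        = ∫ τ in (0:ℝ)..B, ((if τ < p a then (1:ℝ) else 0) +
            ((s.filter fun x => τ < p x).card : ℝ)) := by
          exact intervalIntegral.integral_congr (fun τ _ => h1 τ)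
      _ = (∫ τ in (0:ℝ)..B, (if τ < p a then (1:ℝ) else 0)) +
            ∫ τ in (0:ℝ)..B, ((s.filter fun x => τ < p x).card : ℝ) :=
          intervalIntegral.integral_add (fmb_ind_integrable _ _) (fmb_intervalIntegrable _ _ _)
      _ = p a + (s.map p).sum := by
          rw [fmb_ind_int _ _ (hp a).1 (hp a).2, ih]
      _ = ((a ::ₘ s).map p).sum := by simp

open Classical in
/-- If the tail probabilities of a bounded nonnegative function `p` over the
multiset `S` are dominated (up to slack `Δ`) by twice the tails over the
reference multiset `R`, and `p` has small average over `R`, then `p` has small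
average over `S`. -/
theorem filtered_mean_bound {d : ℕ} (S R : Multiset (Fin d → ℝ))
    (p : (Fin d → ℝ) → ℝ) (B N Δ ε : ℝ)
    (hN : 0 < N) (hB : 0 < B) (hΔ : 0 < Δ) (hε : 0 < ε)
    (hp : ∀ x, 0 ≤ p x ∧ p x ≤ B)
    (hR : (R.card : ℝ) = N)
    (htail : ∀ τ ∈ Set.Icc (0:ℝ) B,
      ((S.filter fun x => τ < p x).card : ℝ) / N <
        2 * ((R.filter fun x => τ < p x).card : ℝ) / N + Δ)
    (hRmean : (1 / N) * (R.map p).sum ≤ ε / 4)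
    (hΔB : Δ * B ≤ ε / 2) :
    (1 / N) * (S.map p).sum ≤ ε := by
  have hSint := fmb_intervalIntegrable S p B
  have hRint := fmb_intervalIntegrable R p B
  have hgint : IntervalIntegrable
      (fun τ => 2 * ((R.filter fun x => τ < p x).card : ℝ) + Δ * N)
      MeasureTheory.volume 0 B :=
    ((hRint.const_mul 2).add (intervalIntegrable_const))
  have hpt : ∀ τ ∈ Set.Icc (0:ℝ) B,
      ((S.filter fun x => τ < p x).card : ℝ) ≤
        2 * ((R.filter fun x => τ < p x).card : ℝ) + Δ * N := by
    intro τ hτ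
    have h := htail τ hτ
    rw [div_lt_iff₀ hN] at h
    calc ((S.filter fun x => τ < p x).card : ℝ)
        ≤ (2 * ((R.filter fun x => τ < p x).card : ℝ) / N + Δ) * N := h.le
      _ = 2 * ((R.filter fun x => τ < p x).card : ℝ) + Δ * N := by
          field_simp
  have hmono : (∫ τ in (0:ℝ)..B, ((S.filter fun x => τ < p x).card : ℝ)) ≤
      ∫ τ in (0:ℝ)..B, (2 * ((R.filter fun x => τ < p x).card : ℝ) + Δ * N) :=
    intervalIntegral.integral_mono_on hB.le hSint hgint hpt
  have hrhs : (∫ τ in (0:ℝ)..B, (2 * ((R.filter fun x => τ < p x).card : ℝ) + Δ * N))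
      = 2 * (R.map p).sum + Δ * N * B := by
    rw [intervalIntegral.integral_add (hRint.const_mul 2) intervalIntegrable_const,
      intervalIntegral.integral_const_mul, fmb_layer_cake R p B hp,
      intervalIntegral.integral_const]
    ring_nf
  rw [fmb_layer_cake S p B hp, hrhs] at hmono
  have hS : (S.map p).sum ≤ 2 * (R.map p).sum + Δ * N * B := hmono
  have h1 : (1 / N) * (S.map p).sum ≤ (1 / N) * (2 * (R.map p).sum + Δ * N * B) := by
    apply mul_le_mul_of_nonneg_left hS
    positivity
  calc (1 / N) * (S.map p).sum
      ≤ (1 / N) * (2 * (R.map p).sum + Δ * N * B) := h1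
    _ = 2 * ((1 / N) * (R.map p).sum) + Δ * B := by field_simp
    _ ≤ 2 * (ε / 4) + ε / 2 := by
        have := hRmean
        have h2 : 2 * ((1 / N) * (R.map p).sum) ≤ 2 * (ε / 4) := by linarith
        linarith
    _ = ε := by ring
end

section
/- Let μ be a probability measure on a finite set Ω and let p: Ω → ℝ be a function with 0 ≤ p(x) ≤ B for all x. If E_μ[p] > ε and 2·E_ν[p] + ΔB ≤ ε for a second probability measure ν with E_ν[p] ≤ ε/4 and Δ = ε/(2B), then there exists τ ∈ [0, B] such that μ({x : p(x) > τ}) ≥ 2·ν({x : p(x) > τ}) + Δ. -/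
open MeasureTheory

lemma ind_int {c B : ℝ} (h0 : 0 ≤ c) (hcB : c ≤ B) :
    ∫ τ in (0:ℝ)..B, (Set.Iio c).indicator (fun _ => (1:ℝ)) τ = c := by
  rw [intervalIntegral.integral_of_le (h0.trans hcB),
    MeasureTheory.integral_indicator measurableSet_Iio]
  rw [Measure.restrict_restrict measurableSet_Iio]
  have : Set.Iio c ∩ Set.Ioc 0 B = Set.Ioo 0 c := by
    ext x; simp only [Set.mem_inter_iff, Set.mem_Iio, Set.mem_Ioc, Set.mem_Ioo]
    constructor
    · rintro ⟨h1, h2, h3⟩; exact ⟨h2, h1⟩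
    · rintro ⟨h1, h2⟩; exact ⟨h2, h1, (le_of_lt h2).trans hcB⟩
  rw [this, setIntegral_const, Real.volume_real_Ioo_of_le h0, smul_eq_mul, mul_one, sub_zero]

lemma aux_one (c w a b : ℝ) :
    IntervalIntegrable ((Set.Iio c).indicator (fun _ => w)) volume a b := by
  constructor <;>
    exact ((integrableOn_const measure_Ioc_lt_top.ne) :
      IntegrableOn (fun _ => w) _ volume).indicator measurableSet_Iio

lemma aux_funeq {Ω : Type*} [Fintype Ω] (p w : Ω → ℝ) :
    (fun τ => ∑ x : Ω, w x * (Set.Iio (p x)).indicator (fun _ => (1:ℝ)) τ)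
      = ∑ x : Ω, (Set.Iio (p x)).indicator (fun _ => w x) := by
  ext τ
  rw [Finset.sum_apply]
  refine Finset.sum_congr rfl fun x _ => ?_
  by_cases h : τ < p x <;> simp [Set.indicator, Set.mem_Iio, h]

lemma aux_ii {Ω : Type*} [Fintype Ω] (p w : Ω → ℝ) (B : ℝ) :
    IntervalIntegrable
      (fun τ => ∑ x : Ω, w x * (Set.Iio (p x)).indicator (fun _ => (1:ℝ)) τ)
      volume 0 B := by
  rw [aux_funeq]
  exact IntervalIntegrable.sum _ fun x _ =>
    aux_one (p x) (w x) 0 B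

lemma aux_val {Ω : Type*} [Fintype Ω] (p w : Ω → ℝ) {B : ℝ}
    (hp : ∀ x, 0 ≤ p x ∧ p x ≤ B) :
    ∫ τ in (0:ℝ)..B, (∑ x : Ω, w x * (Set.Iio (p x)).indicator (fun _ => (1:ℝ)) τ)
      = ∑ x : Ω, w x * p x := by
  rw [intervalIntegral.integral_finset_sum]
  · refine Finset.sum_congr rfl fun x _ => ?_
    rw [intervalIntegral.integral_const_mul, ind_int (hp x).1 (hp x).2]
  · intro x _
    have : (fun τ => w x * (Set.Iio (p x)).indicator (fun _ => (1:ℝ)) τ)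
        = (Set.Iio (p x)).indicator (fun _ => w x) := by
      ext τ; by_cases h : τ < p x <;> simp [Set.indicator, Set.mem_Iio, h]
    rw [this]
    exact aux_one (p x) (w x) 0 B

lemma aux_filter_eq {Ω : Type*} [Fintype Ω] (p w : Ω → ℝ) (τ : ℝ)
    [DecidablePred fun x => τ < p x] :
    (∑ x ∈ Finset.univ.filter fun x => τ < p x, w x)
      = ∑ x : Ω, w x * (Set.Iio (p x)).indicator (fun _ => (1:ℝ)) τ := by
  rw [Finset.sum_filter]
  refine Finset.sum_congr rfl fun x _ => ?_
  by_cases h : τ < p x <;> simp [Set.indicator, Set.mem_Iio, h]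

open Classical in
/-- Existence of a filtering threshold: if a bounded nonnegative function `p`
has mean `> ε` under `μ` but mean `≤ ε/4` under the reference measure `ν`, then
some threshold `τ ∈ [0,B]` exhibits a tail-probability gap of at least
`Δ = ε/(2B)`. -/
theorem exists_filtering_threshold {Ω : Type*} [Fintype Ω]
    (p : Ω → ℝ) (B ε Δ : ℝ) (hB : 0 < B) (hε : 0 < ε)
    (hp : ∀ x, 0 ≤ p x ∧ p x ≤ B)
    (μ ν : Ω → ℝ)
    (hμ0 : ∀ x, 0 ≤ μ x) (hμ1 : ∑ x : Ω, μ x = 1)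
    (hν0 : ∀ x, 0 ≤ ν x) (hν1 : ∑ x : Ω, ν x = 1)
    (hΔ : Δ = ε / (2 * B))
    (hμmean : ε < ∑ x : Ω, μ x * p x)
    (hνmean : ∑ x : Ω, ν x * p x ≤ ε / 4)
    (hcomb : 2 * (∑ x : Ω, ν x * p x) + Δ * B ≤ ε) :
    ∃ τ ∈ Set.Icc (0:ℝ) B,
      2 * (∑ x ∈ Finset.univ.filter fun x => τ < p x, ν x) + Δ ≤
        ∑ x ∈ Finset.univ.filter fun x => τ < p x, μ x := by
  by_contra hcon
  push_neg at hcon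
  have hmono : ∫ τ in (0:ℝ)..B,
      (∑ x : Ω, μ x * (Set.Iio (p x)).indicator (fun _ => (1:ℝ)) τ) ≤
      ∫ τ in (0:ℝ)..B,
      (2 * (∑ x : Ω, ν x * (Set.Iio (p x)).indicator (fun _ => (1:ℝ)) τ) + Δ) := by
    apply intervalIntegral.integral_mono_on hB.le (aux_ii p μ B)
    · exact ((aux_ii p ν B).const_mul 2).add intervalIntegrable_const
    · intro τ hτ
      have h := hcon τ hτ
      rw [aux_filter_eq p μ τ, aux_filter_eq p ν τ] at h
      linarith
  have hrhs : ∫ τ in (0:ℝ)..B,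
      (2 * (∑ x : Ω, ν x * (Set.Iio (p x)).indicator (fun _ => (1:ℝ)) τ) + Δ)
      = 2 * (∑ x : Ω, ν x * p x) + Δ * B := by
    rw [intervalIntegral.integral_add ((aux_ii p ν B).const_mul 2) intervalIntegrable_const,
      intervalIntegral.integral_const_mul, aux_val p ν hp, intervalIntegral.integral_const,
      smul_eq_mul, sub_zero, mul_comm B Δ]
  rw [aux_val p μ hp, hrhs] at hmono
  linarith
end
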